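/- arXiv:2305.04930 — 6 statements merged into one kernel-verified Lean document; each statement's English description precedes it below -/
import Mathlib

section
/- For 0 < λ < λ̃, c > 0, σ² ≥ 0, define the detection error probability P_e(τ) on [σ² + c, ∞) by P_e(τ) = 1 + [λ̃ e^{-(τ-σ²)/λ̃}(1 - e^{c/λ̃}) + λ e^{-(τ-σ²)/λ}(e^{c/λ} - 1)]/c. Then P_e has a unique critical point at τ* = (λ̃λ/(λ̃-λ)) ln Δ + σ², where Δ = (e^{c/λ} - 1)/(e^{c/λ̃} - 1), i.e., P_e'(τ*) = 0. -/
/-!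
Both exponentials have derivative proportional to themselves, so `P_e'(τ)` is a difference
`(e^{c/λ̃} - 1) e^{-(τ-σ²)/λ̃} - (e^{c/λ} - 1) e^{-(τ-σ²)/λ}` of two positive exponentials with
distinct rates. Its vanishing is a linear equation in `τ` after taking logarithms, whose unique
solution is `τ*`.
-/

open Real

theorem Real.mul_exp_neg_div_eq_mul_exp_neg_div_iff {a b p q : ℝ} (x : ℝ) (ha : a ≠ 0)
    (hb : b ≠ 0) (hab : a ≠ b) (hp : 0 < p) (hq : 0 < q) :
    p * exp (-x / a) = q * exp (-x / b) ↔ x = a * b / (a - b) * log (q / p) := by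
  have hab' : a - b ≠ 0 := sub_ne_zero.mpr hab
  have hexp : p * exp (-x / a) = q * exp (-x / b) ↔ exp (x * ((a - b) / (a * b))) = q / p := by
    rw [eq_div_iff hp.ne', show x * ((a - b) / (a * b)) = -x / a - -x / b by field_simp; ring,
      exp_sub, div_mul_eq_mul_div, div_eq_iff (exp_pos _).ne', mul_comm (exp _) p]
  rw [hexp, ← exp_log (div_pos hq hp), exp_eq_exp, log_exp]
  generalize log (q / p) = L
  constructor <;> rintro rfl <;> field_simp

theorem hasDerivAt_mul_exp_neg_sub_div {a : ℝ} (s τ : ℝ) (ha : a ≠ 0) :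
    HasDerivAt (fun t => a * exp (-(t - s) / a)) (-exp (-(τ - s) / a)) τ := by
  have hlin : HasDerivAt (fun t : ℝ => -(t - s) / a) (-1 / a) τ :=
    ((hasDerivAt_id τ).sub_const s).neg.div_const a
  exact (hlin.exp.const_mul a).congr_deriv (by field_simp)

/-- The detection error probability `P_e` on the branch `τ ≥ σ² + c`. -/
noncomputable def detectionError (lam lamt c σ2 : ℝ) (τ : ℝ) : ℝ :=
  1 + (lamt * exp (-(τ - σ2) / lamt) * (1 - exp (c / lamt)) +
    lam * exp (-(τ - σ2) / lam) * (exp (c / lam) - 1)) / c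

theorem hasDerivAt_detectionError {lam lamt : ℝ} (c σ2 τ : ℝ) (hlam : lam ≠ 0)
    (hlamt : lamt ≠ 0) :
    HasDerivAt (detectionError lam lamt c σ2)
      (((exp (c / lamt) - 1) * exp (-(τ - σ2) / lamt)
        - (exp (c / lam) - 1) * exp (-(τ - σ2) / lam)) / c) τ := by
  have h := ((((hasDerivAt_mul_exp_neg_sub_div σ2 τ hlamt).mul_const (1 - exp (c / lamt))).add
    ((hasDerivAt_mul_exp_neg_sub_div σ2 τ hlam).mul_const (exp (c / lam) - 1))).div_const c
    ).const_add 1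
  exact h.congr_deriv (by ring)

theorem deriv_detectionError_eq_zero_iff {lam lamt c : ℝ} (σ2 τ : ℝ) (hlam : 0 < lam)
    (hll : lam < lamt) (hc : 0 < c) :
    deriv (detectionError lam lamt c σ2) τ = 0 ↔
      τ = lamt * lam / (lamt - lam) *
        log ((exp (c / lam) - 1) / (exp (c / lamt) - 1)) + σ2 := by
  have hlamt : 0 < lamt := hlam.trans hll
  have hgap (l : ℝ) (hl : 0 < l) : 0 < exp (c / l) - 1 :=
    sub_pos.mpr (one_lt_exp_iff.mpr (div_pos hc hl))
  rw [(hasDerivAt_detectionError c σ2 τ hlam.ne' hlamt.ne').deriv, div_eq_zero_iff,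
    or_iff_left hc.ne', sub_eq_zero, ← sub_eq_iff_eq_add,
    mul_exp_neg_div_eq_mul_exp_neg_div_iff (τ - σ2) hlamt.ne' hlam.ne' hll.ne'
      (hgap lamt hlamt) (hgap lam hlam)]

theorem stmt2_general (lam lamt c σ2 : ℝ) (h0 : 0 < lam) (hll : lam < lamt) (hc : 0 < c) :
    let Pe : ℝ → ℝ := fun τ =>
      1 + (lamt * Real.exp (-(τ - σ2) / lamt) * (1 - Real.exp (c / lamt)) +
           lam * Real.exp (-(τ - σ2) / lam) * (Real.exp (c / lam) - 1)) / c
    let Δ : ℝ := (Real.exp (c / lam) - 1) / (Real.exp (c / lamt) - 1)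
    let τs : ℝ := lamt * lam / (lamt - lam) * Real.log Δ + σ2
    deriv Pe τs = 0 ∧ ∀ τ, σ2 + c ≤ τ → deriv Pe τ = 0 → τ = τs := by
  intro Pe Δ τs
  have hcrit (τ : ℝ) : deriv Pe τ = 0 ↔ τ = τs :=
    deriv_detectionError_eq_zero_iff σ2 τ h0 hll hc
  exact ⟨(hcrit τs).mpr rfl, fun τ _ => (hcrit τ).mp⟩

/-- Third-branch detection error probability has a unique critical point
at `τ* = (λ̃λ/(λ̃-λ)) ln Δ + σ²`. -/
theorem stmt2 (lam lamt c σ2 : ℝ) (h0 : 0 < lam) (hll : lam < lamt) (hc : 0 < c)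
    (hσ : 0 ≤ σ2) :
    let Pe : ℝ → ℝ := fun τ =>
      1 + (lamt * Real.exp (-(τ - σ2) / lamt) * (1 - Real.exp (c / lamt)) +
           lam * Real.exp (-(τ - σ2) / lam) * (Real.exp (c / lam) - 1)) / c
    let Δ : ℝ := (Real.exp (c / lam) - 1) / (Real.exp (c / lamt) - 1)
    let τs : ℝ := lamt * lam / (lamt - lam) * Real.log Δ + σ2
    deriv Pe τs = 0 ∧ ∀ τ, σ2 + c ≤ τ → deriv Pe τ = 0 → τ = τs :=
  stmt2_general lam lamt c σ2 h0 hll hc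
end

section
/- For 0 < λ < λ̃, c > 0, with Δ = (e^{c/λ} - 1)/(e^{c/λ̃} - 1) and τ* = (λ̃λ/(λ̃-λ)) ln Δ + σ², the threshold τ* satisfies τ* ≥ σ² + c. -/
open Real

/-- The optimal detection threshold lies in the third branch: `τ* ≥ σ² + c`. -/
theorem stmt4 (lam lamt c σ2 : ℝ) (h0 : 0 < lam) (hll : lam < lamt) (hc : 0 < c) :
    lamt * lam / (lamt - lam) *
        Real.log ((Real.exp (c / lam) - 1) / (Real.exp (c / lamt) - 1)) + σ2 ≥
      σ2 + c := by
  have h0t : 0 < lamt := h0.trans hll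
  set a := c / lamt with ha
  set b := c / lam with hb
  have hapos : 0 < a := div_pos hc h0t
  have hbpos : 0 < b := div_pos hc h0
  have hab : a ≤ b := by
    apply div_le_div_of_nonneg_left hc.le h0 hll.le
  have hea : 0 < Real.exp a - 1 := by
    nlinarith [Real.add_one_le_exp a]
  have heb : 0 < Real.exp b - 1 := by nlinarith [Real.add_one_le_exp b]
  -- key: (e^b - 1)/(e^a - 1) ≥ e^(b-a)
  have key : Real.exp (b - a) ≤ (Real.exp b - 1) / (Real.exp a - 1) := by
    rw [le_div_iff₀ hea]
    have h1 : Real.exp (b - a) * (Real.exp a - 1) = Real.exp b - Real.exp (b - a) := by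
      rw [mul_sub, ← Real.exp_add]
      ring_nf
    rw [h1]
    have : (1:ℝ) ≤ Real.exp (b - a) := Real.one_le_exp (by linarith)
    linarith
  have hlog : b - a ≤ Real.log ((Real.exp b - 1) / (Real.exp a - 1)) := by
    calc b - a = Real.log (Real.exp (b - a)) := (Real.log_exp _).symm
    _ ≤ _ := Real.log_le_log (Real.exp_pos _) key
  have hcoef : 0 < lamt * lam / (lamt - lam) := by
    apply div_pos (by positivity) (by linarith)
  have hmul : lamt * lam / (lamt - lam) * (b - a) ≤
      lamt * lam / (lamt - lam) * Real.log ((Real.exp b - 1) / (Real.exp a - 1)) :=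
    mul_le_mul_of_nonneg_left hlog hcoef.le
  have heq : lamt * lam / (lamt - lam) * (b - a) = c := by
    rw [ha, hb, div_mul_eq_mul_div, div_eq_iff (by intro h; linarith [sub_eq_zero.mp h] : lamt - lam ≠ 0)]
    field_simp
  linarith
end

section
/- Let ℓ, θ_r, ϖ_b, ϖ_c, P, μ > 0, and set λ_a = ℓθ_r ϖ_c, λ̃_a = ℓθ_r(ϖ_b + ϖ_c) and, for γ > 0, Δ̂(γ) = exp(γP(λ̃_a - λ_a)/(λ̃_a λ_a)). Then ∫₀^∞ [1 - (ℓθ_rϖ_b/(γP))·Δ̂(γ)^{-ϖ_c/ϖ_b}·(e^{γP/(ℓθ_r(ϖ_b+ϖ_c))} - 1)]·(1/μ)e^{-γ/μ} dγ = 1 + (ℓθ_rϖ_b/(Pμ))·ln(ℓθ_r(ϖ_b+ϖ_c)/(ℓθ_r(ϖ_b+ϖ_c) + Pμ)). -/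
open Real MeasureTheory Set

lemma aux_exp_int {t : ℝ} (ht : 0 < t) :
    ∫ γ in Ioi (0:ℝ), Real.exp (-(t * γ)) = 1 / t := by
  rw [MeasureTheory.integral_comp_mul_left_Ioi (fun x => Real.exp (-x)) 0 ht]
  simp [integral_exp_neg_Ioi, integral_exp_Iic_zero, one_div]

lemma aux_nonneg_bound {α β : ℝ} (hα : 0 < α) (hαβ : α ≤ β) {γ : ℝ} (hγ : 0 < γ) :
    0 ≤ (Real.exp (-(α * γ)) - Real.exp (-(β * γ))) / γ ∧
      (Real.exp (-(α * γ)) - Real.exp (-(β * γ))) / γ ≤ (β - α) * Real.exp (-(α * γ)) := by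
  have h1 : Real.exp (-(β * γ)) ≤ Real.exp (-(α * γ)) := by
    apply Real.exp_le_exp.2; nlinarith
  constructor
  · exact div_nonneg (by linarith) hγ.le
  · rw [div_le_iff₀ hγ]
    have key : 1 - Real.exp (-((β - α) * γ)) ≤ (β - α) * γ := by
      have := Real.add_one_le_exp (-((β - α) * γ))
      nlinarith [Real.exp_pos (-((β - α) * γ))]
    have hfac : Real.exp (-(α * γ)) - Real.exp (-(β * γ))
        = Real.exp (-(α * γ)) * (1 - Real.exp (-((β - α) * γ))) := by
      rw [mul_sub, mul_one, ← Real.exp_add]; ring_nf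
    rw [hfac]
    have := Real.exp_pos (-(α * γ))
    nlinarith

lemma frullani_meas {α β : ℝ} :
    Measurable (fun γ => (Real.exp (-(α * γ)) - Real.exp (-(β * γ))) / γ) := by
  exact ((Real.measurable_exp.comp ((measurable_id.const_mul α).neg)).sub
    (Real.measurable_exp.comp ((measurable_id.const_mul β).neg))).div measurable_id

lemma frullani_integrable {α β : ℝ} (hα : 0 < α) (hαβ : α ≤ β) :
    IntegrableOn (fun γ => (Real.exp (-(α * γ)) - Real.exp (-(β * γ))) / γ) (Ioi (0:ℝ)) := by
  have hbase : IntegrableOn (fun γ => (β - α) * Real.exp (-(α * γ))) (Ioi (0:ℝ)) := by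
    simpa [neg_mul, IntegrableOn] using (exp_neg_integrableOn_Ioi 0 hα).const_mul (β - α)
  refine hbase.mono' frullani_meas.aestronglyMeasurable ?_
  filter_upwards [ae_restrict_mem measurableSet_Ioi] with γ (hγ : (0:ℝ) < γ)
  obtain ⟨h0, h1⟩ := aux_nonneg_bound hα hαβ hγ
  rw [Real.norm_eq_abs, abs_of_nonneg h0]
  exact h1

lemma inner_t_integral {α β : ℝ} (hαβ : α ≤ β) {γ : ℝ} (hγ : 0 < γ) :
    ∫ t in Ioc α β, Real.exp (-(t * γ)) =
      (Real.exp (-(α * γ)) - Real.exp (-(β * γ))) / γ := by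
  have hγ' : γ ≠ 0 := hγ.ne'
  rw [← intervalIntegral.integral_of_le hαβ]
  have hd : ∀ t ∈ Set.uIcc α β, HasDerivAt (fun s => -(Real.exp (-(s * γ)) / γ))
      (Real.exp (-(t * γ))) t := by
    intro t _
    have h1 : HasDerivAt (fun s : ℝ => -(s * γ)) (-γ) t := (hasDerivAt_mul_const γ).neg
    have h2 := (h1.exp.div_const γ).neg
    refine h2.congr_deriv ?_
    rw [mul_neg, neg_div, neg_neg, mul_div_cancel_right₀ _ hγ']
  rw [intervalIntegral.integral_eq_sub_of_hasDerivAt hd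
    ((Real.continuous_exp.comp ((continuous_id.mul continuous_const).neg)).intervalIntegrable α β)]
  ring

lemma frullani {α β : ℝ} (hα : 0 < α) (hαβ : α ≤ β) :
    ∫ γ in Ioi (0:ℝ), (Real.exp (-(α * γ)) - Real.exp (-(β * γ))) / γ
      = Real.log (β / α) := by
  set μIoi := volume.restrict (Ioi (0:ℝ)) with hμIoi
  set μIoc := volume.restrict (Ioc α β) with hμIoc
  have hcont : Continuous (fun p : ℝ × ℝ => Real.exp (-(p.2 * p.1))) := by
    continuity
  have hIntP : Integrable (fun p : ℝ × ℝ => Real.exp (-(p.2 * p.1))) (μIoi.prod μIoc) := by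
    rw [MeasureTheory.integrable_prod_iff hcont.aestronglyMeasurable]
    constructor
    · filter_upwards with γ
      exact (Real.continuous_exp.comp ((continuous_id.mul continuous_const).neg)).integrableOn_Ioc
    · have hbase : IntegrableOn (fun γ => (β - α) * Real.exp (-(α * γ))) (Ioi (0:ℝ)) := by
        simpa [neg_mul, IntegrableOn] using (exp_neg_integrableOn_Ioi 0 hα).const_mul (β - α)
      refine hbase.mono' ?_ ?_
      · exact hcont.aestronglyMeasurable.norm.integral_prod_right'
      · filter_upwards [ae_restrict_mem measurableSet_Ioi] with γ (hγ : (0:ℝ) < γ)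
        have hnn : 0 ≤ ∫ t, ‖Real.exp (-(t * γ))‖ ∂μIoc :=
          integral_nonneg fun t => norm_nonneg _
        rw [Real.norm_eq_abs, abs_of_nonneg hnn]
        have hb : ∫ t, ‖Real.exp (-(t * γ))‖ ∂μIoc ≤ ∫ _t, Real.exp (-(α * γ)) ∂μIoc := by
          apply integral_mono_of_nonneg
          · filter_upwards with t; exact norm_nonneg _
          · exact integrable_const _
          · rw [hμIoc]
            filter_upwards [ae_restrict_mem measurableSet_Ioc] with t ht
            rw [Real.norm_eq_abs, abs_of_pos (Real.exp_pos _)]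
            apply Real.exp_le_exp.2
            nlinarith [ht.1]
        refine hb.trans ?_
        rw [integral_const]
        simp only [hμIoc, Measure.restrict_apply_univ, Real.volume_Ioc, smul_eq_mul]
        simp only [Measure.real, Measure.restrict_apply_univ, Real.volume_Ioc]
        rw [ENNReal.toReal_ofReal (by linarith)]
  have hInt : Integrable (Function.uncurry fun γ t => Real.exp (-(t * γ))) (μIoi.prod μIoc) := hIntP
  have swap := MeasureTheory.integral_integral_swap hInt
  have lhs_eq : (∫ γ, ∫ t, Real.exp (-(t * γ)) ∂μIoc ∂μIoi)
      = ∫ γ in Ioi (0:ℝ), (Real.exp (-(α * γ)) - Real.exp (-(β * γ))) / γ := by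
    rw [hμIoi]
    apply MeasureTheory.setIntegral_congr_fun measurableSet_Ioi
    intro γ hγ
    exact inner_t_integral hαβ hγ
  have rhs_eq : (∫ t, ∫ γ, Real.exp (-(t * γ)) ∂μIoi ∂μIoc) = Real.log (β / α) := by
    rw [hμIoc]
    have : ∀ t ∈ Ioc α β, (∫ γ, Real.exp (-(t * γ)) ∂μIoi) = 1 / t := by
      intro t ht
      rw [hμIoi]
      exact aux_exp_int (lt_of_lt_of_le hα ht.1.le)
    rw [MeasureTheory.setIntegral_congr_fun measurableSet_Ioc this,
      ← intervalIntegral.integral_of_le hαβ,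
      integral_one_div_of_pos hα (lt_of_lt_of_le hα hαβ)]
  rw [← lhs_eq, swap, rhs_eq]

/-- Closed-form evaluation of the averaged lower-bound asymptotic minimum DEP. -/
theorem stmt7 (ℓ θr ϖb ϖc P μ : ℝ) (hℓ : 0 < ℓ) (hθ : 0 < θr) (hϖb : 0 < ϖb)
    (hϖc : 0 < ϖc) (hP : 0 < P) (hμ : 0 < μ) :
    let lamA : ℝ := ℓ * θr * ϖc
    let lamtA : ℝ := ℓ * θr * (ϖb + ϖc)
    let Δhat : ℝ → ℝ := fun γ => Real.exp (γ * P * (lamtA - lamA) / (lamtA * lamA))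
    ∫ γ in Set.Ioi (0 : ℝ),
        (1 - ℓ * θr * ϖb / (γ * P) * Δhat γ ^ (-ϖc / ϖb) *
          (Real.exp (γ * P / (ℓ * θr * (ϖb + ϖc))) - 1)) * ((1 / μ) * Real.exp (-γ / μ)) =
      1 + ℓ * θr * ϖb / (P * μ) *
        Real.log (ℓ * θr * (ϖb + ϖc) / (ℓ * θr * (ϖb + ϖc) + P * μ)) := by
  intro lamA lamtA Δhat
  have hB : 0 < ℓ * θr * (ϖb + ϖc) := by positivity
  set B : ℝ := ℓ * θr * (ϖb + ϖc) with hBdef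
  set A : ℝ := ℓ * θr * ϖb with hAdef
  have hA : 0 < A := by positivity
  have hα : (0:ℝ) < μ⁻¹ := inv_pos.2 hμ
  have hαβ : μ⁻¹ ≤ μ⁻¹ + P / B := by
    have : 0 < P / B := div_pos hP hB
    linarith
  have hEq : Set.EqOn
      (fun γ => (1 - ℓ * θr * ϖb / (γ * P) * Δhat γ ^ (-ϖc / ϖb) *
          (Real.exp (γ * P / (ℓ * θr * (ϖb + ϖc))) - 1)) * ((1 / μ) * Real.exp (-γ / μ)))
      (fun γ => (1 / μ) * Real.exp (-(μ⁻¹ * γ)) -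
        (A / (P * μ)) * ((Real.exp (-(μ⁻¹ * γ)) - Real.exp (-((μ⁻¹ + P / B) * γ))) / γ))
      (Set.Ioi (0:ℝ)) := by
    intro γ hγ
    have hγ0 : (0:ℝ) < γ := hγ
    have hrpow : Δhat γ ^ (-ϖc / ϖb) = Real.exp (-(γ * P / B)) := by
      show (Real.exp (γ * P * (lamtA - lamA) / (lamtA * lamA))) ^ (-ϖc / ϖb) = _
      rw [Real.rpow_def_of_pos (Real.exp_pos _), Real.log_exp]
      congr 1
      simp only [lamA, lamtA, hBdef]
      field_simp
      ring
    simp only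
    rw [hrpow]
    have h1 : Real.exp (-(γ * P / B)) * (Real.exp (γ * P / (ℓ * θr * (ϖb + ϖc))) - 1)
        = 1 - Real.exp (-(γ * P / B)) := by
      rw [← hBdef, mul_sub, ← Real.exp_add, neg_add_cancel, Real.exp_zero, mul_one]
    rw [mul_assoc, h1]
    have h2 : Real.exp (-((μ⁻¹ + P / B) * γ)) = Real.exp (-(μ⁻¹ * γ)) * Real.exp (-(γ * P / B)) := by
      rw [← Real.exp_add]
      congr 1
      field_simp
      ring
    have h3 : Real.exp (-γ / μ) = Real.exp (-(μ⁻¹ * γ)) := by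
      congr 1; field_simp
    rw [h2, h3, ← hAdef]
    field_simp
  rw [MeasureTheory.setIntegral_congr_fun measurableSet_Ioi hEq]
  have hInt1 : IntegrableOn (fun γ => (1 / μ) * Real.exp (-(μ⁻¹ * γ))) (Ioi (0:ℝ)) := by
    simpa [neg_mul, IntegrableOn] using (exp_neg_integrableOn_Ioi 0 hα).const_mul (1 / μ)
  have hInt2 : IntegrableOn (fun γ => (A / (P * μ)) *
      ((Real.exp (-(μ⁻¹ * γ)) - Real.exp (-((μ⁻¹ + P / B) * γ))) / γ)) (Ioi (0:ℝ)) :=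
    (frullani_integrable hα hαβ).const_mul _
  rw [MeasureTheory.integral_sub hInt1 hInt2, MeasureTheory.integral_const_mul,
    MeasureTheory.integral_const_mul, aux_exp_int hα, frullani hα hαβ]
  have hlog : Real.log ((μ⁻¹ + P / B) / μ⁻¹) = - Real.log (B / (B + P * μ)) := by
    rw [← Real.log_inv]
    congr 1
    rw [inv_div]
    field_simp
  rw [hlog]
  have h4 : (1 / μ) * (1 / μ⁻¹) = 1 := by field_simp
  rw [h4]
  ring
end

section
/- Let G ~ Exp(1) and P_j ~ Uniform[0, P_max] be independent, P_max > 0, φ > 0, and Γ ≥ 0. Then P(G·P_j > Γ/φ) = e^{-Γ/(φP_max)} + (Γ/(φP_max))·Ei(-Γ/(φP_max)), where Ei(x) = -∫_{-x}^∞ e^{-t}/t dt is the exponential integral; and if Γ < 0 the probability is 1. -/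
/-!
Condition on `G = x`. Since `P_j` is uniform on `[0, P_max]`, the event `x P_j > c` (with
`c = Γ/φ > 0` and `a = c/P_max`) has probability `(1 - a/x)⁺`, so the outage probability is
`∫_a^∞ (1 - a/x) e^{-x} dx = e^{-a} - a ∫_a^∞ e^{-x}/x dx = e^{-a} + a Ei(-a)`.
For `c ≤ 0` the event contains `{G > 0, P_j > 0}`, which has probability one.
-/

open MeasureTheory ProbabilityTheory Real

/-- The exponential integral `Ei(x) = -∫_{-x}^∞ e^{-t}/t dt`. -/
noncomputable def Ei (x : ℝ) : ℝ := -∫ t in Set.Ioi (-x), Real.exp (-t) / t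

open Set

lemma integrableOn_exp_neg_div_Ioi {a : ℝ} (ha : 0 < a) :
    IntegrableOn (fun x ↦ exp (-x) / x) (Ioi a) := by
  refine Integrable.mono ((integrableOn_exp_neg_Ioi a).const_mul a⁻¹)
    (by fun_prop : Measurable fun x ↦ exp (-x) / x).aestronglyMeasurable ?_
  filter_upwards [ae_restrict_mem measurableSet_Ioi] with x hx
  have hx0 : 0 < x := ha.trans hx
  rw [norm_of_nonneg (by positivity), norm_of_nonneg (by positivity), div_eq_inv_mul]
  gcongr
  exact hx.le

lemma integral_Ioi_one_sub_div_mul_exp_neg {a : ℝ} (ha : 0 < a) :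
    ∫ x in Ioi a, (1 - a / x) * exp (-x) = exp (-a) + a * Ei (-a) := by
  have hsplit : EqOn (fun x ↦ (1 - a / x) * exp (-x)) (fun x ↦ exp (-x) - a * (exp (-x) / x))
      (Ioi a) := fun x hx ↦ by
    have : x ≠ 0 := (ha.trans hx).ne'
    field_simp
  rw [setIntegral_congr_fun measurableSet_Ioi hsplit,
    integral_sub (integrableOn_exp_neg_Ioi a) ((integrableOn_exp_neg_div_Ioi ha).const_mul a),
    integral_const_mul, integral_exp_neg_Ioi, Ei, neg_neg]
  ring

lemma expMeasure_eq_withDensity (r : ℝ) : expMeasure r = volume.withDensity (exponentialPDF r) :=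
  rfl

lemma expMeasure_Ioi_zero {r : ℝ} (hr : 0 < r) : expMeasure r (Ioi 0) = 1 := by
  have := isProbabilityMeasure_expMeasure hr
  rw [← compl_Iic, prob_compl_eq_one_iff measurableSet_Iic, expMeasure_eq_withDensity,
    withDensity_apply _ measurableSet_Iic, setLIntegral_congr Iio_ae_eq_Iic.symm]
  exact lintegral_exponentialPDF_of_nonpos le_rfl

lemma cond_Icc_Ioi_zero {b : ℝ} (hb : 0 < b) : volume[|Icc 0 b] (Ioi 0) = 1 := by
  have hinter : Icc 0 b ∩ Ioi 0 = Ioc 0 b := by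
    ext y
    simp only [mem_inter_iff, mem_Icc, mem_Ioi, mem_Ioc]
    constructor
    · rintro ⟨⟨-, hyb⟩, hy0⟩
      exact ⟨hy0, hyb⟩
    · rintro ⟨hy0, hyb⟩
      exact ⟨⟨hy0.le, hyb⟩, hy0⟩
  rw [cond_apply measurableSet_Icc, hinter, Real.volume_Icc, Real.volume_Ioc]
  exact ENNReal.inv_mul_cancel (by simpa using hb) ENNReal.ofReal_ne_top

lemma cond_Icc_setOf_lt_mul {b c : ℝ} (hb : 0 < b) (hc : 0 < c) (x : ℝ) :
    volume[|Icc 0 b] {y | c < x * y} =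
      (Ioi (c / b)).indicator (fun x ↦ ENNReal.ofReal (1 - c / b / x)) x := by
  rw [cond_apply measurableSet_Icc, Real.volume_Icc, sub_zero]
  by_cases hx : c / b < x
  · have hx0 : 0 < x := (div_pos hc hb).trans hx
    have hslice : Icc 0 b ∩ {y | c < x * y} = Ioc (c / x) b := by
      ext y
      simp only [mem_inter_iff, mem_Icc, mem_ofPred_eq, mem_Ioc, div_lt_iff₀ hx0, mul_comm y]
      constructor
      · rintro ⟨⟨-, hyb⟩, hcy⟩
        exact ⟨hcy, hyb⟩
      · rintro ⟨hcy, hyb⟩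
        exact ⟨⟨nonneg_of_mul_nonneg_right (by linarith) hx0, hyb⟩, hcy⟩
    rw [hslice, Real.volume_Ioc, indicator_of_mem (show x ∈ Ioi (c / b) from hx),
      ← ENNReal.div_eq_inv_mul, ← ENNReal.ofReal_div_of_pos hb]
    congr 1
    field_simp
  · have hxb : x * b ≤ c := by rwa [not_lt, le_div_iff₀ hb] at hx
    have hslice : Icc 0 b ∩ {y | c < x * y} = ∅ := by
      ext y
      simp only [mem_inter_iff, mem_Icc, mem_ofPred_eq, mem_empty_iff_false, iff_false, not_and,
        not_lt]
      rintro ⟨hy0, hyb⟩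
      rcases le_or_gt x 0 with hx0 | hx0 <;> nlinarith
    rw [hslice, measure_empty, mul_zero, indicator_of_notMem (show x ∉ Ioi (c / b) from hx)]

lemma expMeasure_prod_cond_Icc_setOf_lt_mul {b c : ℝ} (hb : 0 < b) (hc : 0 < c) :
    ((expMeasure 1).prod (volume[|Icc 0 b]) {p : ℝ × ℝ | c < p.1 * p.2}).toReal =
      exp (-(c / b)) + c / b * Ei (-(c / b)) := by
  have ha : 0 < c / b := div_pos hc hb
  have hfactor_nonneg : ∀ x ∈ Ioi (c / b), 0 ≤ 1 - c / b / x := fun x hx ↦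
    sub_nonneg.2 ((div_le_one (ha.trans hx)).2 hx.le)
  have hdensity : ∀ x ∈ Ioi (c / b), exponentialPDF 1 x * ENNReal.ofReal (1 - c / b / x) =
      ENNReal.ofReal ((1 - c / b / x) * exp (-x)) := fun x hx ↦ by
    rw [exponentialPDF_of_nonneg (ha.trans hx).le, one_mul, one_mul, mul_comm,
      ENNReal.ofReal_mul (hfactor_nonneg x hx)]
  have hnonneg : ∀ x ∈ Ioi (c / b), 0 ≤ (1 - c / b / x) * exp (-x) := fun x hx ↦
    mul_nonneg (hfactor_nonneg x hx) (exp_pos _).le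
  have hpdf : Measurable (exponentialPDF 1) := (measurable_exponentialPDFReal 1).ennreal_ofReal
  rw [Measure.prod_apply (measurableSet_lt measurable_const (by fun_prop))]
  simp only [preimage_ofPred_eq, cond_Icc_setOf_lt_mul hb hc]
  rw [lintegral_indicator measurableSet_Ioi, expMeasure_eq_withDensity,
    setLIntegral_withDensity_eq_setLIntegral_mul _ hpdf (by fun_prop) measurableSet_Ioi]
  simp only [Pi.mul_apply]
  rw [setLIntegral_congr_fun measurableSet_Ioi hdensity,
    ← integral_eq_lintegral_of_nonneg_ae (ae_restrict_of_forall_mem measurableSet_Ioi hnonneg)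
      (by fun_prop : Measurable fun x ↦ (1 - c / b / x) * exp (-x)).aestronglyMeasurable]
  exact integral_Ioi_one_sub_div_mul_exp_neg ha

lemma prod_setOf_lt_mul_eq_one {μ ν : Measure ℝ}
    [IsProbabilityMeasure μ] [IsProbabilityMeasure ν]
    (hμ : μ (Ioi 0) = 1) (hν : ν (Ioi 0) = 1) {c : ℝ} (hc : c ≤ 0) :
    (μ.prod ν) {p : ℝ × ℝ | c < p.1 * p.2} = 1 := by
  refine le_antisymm prob_le_one ?_
  calc 1 = (μ.prod ν) (Ioi 0 ×ˢ Ioi 0) := by rw [Measure.prod_prod, hμ, hν, one_mul]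
    _ ≤ _ := measure_mono fun p hp ↦ hc.trans_lt (mul_pos hp.1 hp.2)

lemma ProbabilityTheory.IndepFun.measure_preimage_prodMk {Ω β γ : Type*} [MeasurableSpace Ω]
    [MeasurableSpace β] [MeasurableSpace γ] {μ : Measure Ω} [IsFiniteMeasure μ]
    {X : Ω → β} {Y : Ω → γ}
    (hX : Measurable X) (hY : Measurable Y) (hXY : IndepFun X Y μ) {s : Set (β × γ)}
    (hs : MeasurableSet s) :
    μ ((fun ω ↦ (X ω, Y ω)) ⁻¹' s) = ((μ.map X).prod (μ.map Y)) s := by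
  rw [← Measure.map_apply (hX.prodMk hY) hs,
    (indepFun_iff_map_prod_eq_prod_map_map hX.aemeasurable hY.aemeasurable).1 hXY]

/-- Outage probability at Carol: `G ~ Exp(1)`, `P_j ~ Uniform[0, P_max]` independent;
`P(G·P_j > Γ/φ)` in closed form via the exponential integral. -/
theorem stmt10 {Ω : Type*} [MeasurableSpace Ω] (μ : Measure Ω) [IsProbabilityMeasure μ]
    (G Pj : Ω → ℝ) (Pmax φ Γ : ℝ) (hPmax : 0 < Pmax) (hφ : 0 < φ)
    (hGm : Measurable G) (hPjm : Measurable Pj)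
    (hind : IndepFun G Pj μ)
    (hG : μ.map G = expMeasure 1)
    (hPj : pdf.IsUniform Pj (Set.Icc 0 Pmax) μ) :
    (μ {ω | Γ / φ < G ω * Pj ω}).toReal =
      if 0 ≤ Γ then
        Real.exp (-Γ / (φ * Pmax)) + Γ / (φ * Pmax) * Ei (-(Γ / (φ * Pmax)))
      else 1 := by
  have hprob : μ {ω | Γ / φ < G ω * Pj ω} =
      ((expMeasure 1).prod (volume[|Icc 0 Pmax])) {p : ℝ × ℝ | Γ / φ < p.1 * p.2} := by
    rw [← hG, ← hPj]
    exact hind.measure_preimage_prodMk hGm hPjm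
      (measurableSet_lt measurable_const (measurable_fst.mul measurable_snd))
  have hcertain : Γ ≤ 0 → (μ {ω | Γ / φ < G ω * Pj ω}).toReal = 1 := fun hΓ ↦ by
    have := isProbabilityMeasure_expMeasure one_pos
    have := cond_isProbabilityMeasure_of_finite (μ := volume) (s := Icc 0 Pmax)
      (by simp [hPmax]) (by simp)
    rw [hprob, prod_setOf_lt_mul_eq_one (expMeasure_Ioi_zero one_pos) (cond_Icc_Ioi_zero hPmax)
      (div_nonpos_of_nonpos_of_nonneg hΓ hφ.le), ENNReal.toReal_one]
  split_ifs with hΓ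
  · rcases hΓ.eq_or_lt with rfl | hΓ
    · rw [hcertain le_rfl]
      simp
    · rw [hprob, expMeasure_prod_cond_Icc_setOf_lt_mul hPmax (div_pos hΓ hφ), div_div, neg_div]
  · exact hcertain (not_le.1 hΓ).le
end

section
/- The function F(P_max) = e^{-Γ/(φP_max)} + (Γ/(φP_max))·Ei(-Γ/(φP_max)), for fixed Γ, φ > 0, is monotonically increasing in P_max > 0, and F(P_max) → 0 as P_max → 0⁺. -/
/-!
With `u = Γ / (φ P)`, which decreases from `∞` to `0` as `P` runs over `(0, ∞)`, the function is
the generalized exponential integral `E₂(u) = e^{-u} - u E₁(u)`, `E₁(u) = ∫_u^∞ e^{-t}/t dt`.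
For every `a`, `∫_u^∞ e^{-t} (1 - a/t) dt = e^{-u} - a E₁(u)`, so `E₂(u)` is the integral over
`(u, ∞)` of the nonnegative function `e^{-t} (1 - u/t)`; raising `u` both shrinks the integrand
and the domain, so `E₂` is strictly decreasing. Since `0 ≤ u E₁(u) ≤ e^{-u}`, `E₂(u) → 0` as
`u → ∞`.
-/

open Real Filter MeasureTheory Set

noncomputable def expIntegralE₁ (u : ℝ) : ℝ := ∫ t in Ioi u, exp (-t) / t

noncomputable def expIntegralE₂ (u : ℝ) : ℝ := exp (-u) - u * expIntegralE₁ u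

lemma exp_neg_div_le_of_le {c t : ℝ} (hc : 0 < c) (hct : c ≤ t) : exp (-t) / t ≤ exp (-t) / c :=
  div_le_div_of_nonneg_left (exp_pos _).le hc hct

lemma integrableOn_exp_neg_div_Ioi_s11 {c : ℝ} (hc : 0 < c) :
    IntegrableOn (fun t => exp (-t) / t) (Ioi c) := by
  refine ((integrableOn_exp_neg_Ioi c).div_const c).mono' ?_ ?_
  · exact (measurable_exp.comp measurable_neg).div measurable_id |>.aestronglyMeasurable
  · filter_upwards [ae_restrict_mem measurableSet_Ioi] with t (ht : c < t)
    rw [norm_of_nonneg (div_nonneg (exp_pos _).le (hc.trans ht).le)]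
    exact exp_neg_div_le_of_le hc ht.le

lemma expIntegralE₁_pos {u : ℝ} (hu : 0 < u) : 0 < expIntegralE₁ u := by
  rw [expIntegralE₁, setIntegral_pos_iff_support_of_nonneg_ae _ (integrableOn_exp_neg_div_Ioi_s11 hu)]
  · have hsupp : Function.support (fun t => exp (-t) / t) ∩ Ioi u = Ioi u :=
      inter_eq_self_of_subset_right fun t (ht : u < t) =>
        div_ne_zero (exp_pos _).ne' (hu.trans ht).ne'
    rw [hsupp]
    exact Measure.measure_Ioi_pos volume u
  · filter_upwards [ae_restrict_mem measurableSet_Ioi] with t (ht : u < t)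
    exact div_nonneg (exp_pos _).le (hu.trans ht).le

lemma expIntegralE₁_le {u : ℝ} (hu : 0 < u) : expIntegralE₁ u ≤ exp (-u) / u :=
  calc expIntegralE₁ u ≤ ∫ t in Ioi u, exp (-t) / u :=
        setIntegral_mono_on (integrableOn_exp_neg_div_Ioi_s11 hu)
          ((integrableOn_exp_neg_Ioi u).div_const u) measurableSet_Ioi
          fun _ ht => exp_neg_div_le_of_le hu (le_of_lt ht)
    _ = exp (-u) / u := by rw [integral_div, integral_exp_neg_Ioi]

lemma exp_neg_mul_one_sub_div_eq (a : ℝ) :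
    (fun t => exp (-t) * (1 - a / t)) = fun t => exp (-t) - a * (exp (-t) / t) := by
  funext t; ring

lemma integrableOn_exp_neg_mul_one_sub_div_Ioi {u : ℝ} (hu : 0 < u) (a : ℝ) :
    IntegrableOn (fun t => exp (-t) * (1 - a / t)) (Ioi u) := by
  rw [exp_neg_mul_one_sub_div_eq]
  exact (integrableOn_exp_neg_Ioi u).sub ((integrableOn_exp_neg_div_Ioi_s11 hu).const_mul a)

lemma integral_exp_neg_mul_one_sub_div_Ioi {u : ℝ} (hu : 0 < u) (a : ℝ) :
    ∫ t in Ioi u, exp (-t) * (1 - a / t) = exp (-u) - a * expIntegralE₁ u := by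
  rw [exp_neg_mul_one_sub_div_eq, integral_sub (integrableOn_exp_neg_Ioi u)
    ((integrableOn_exp_neg_div_Ioi_s11 hu).const_mul a), integral_const_mul, integral_exp_neg_Ioi,
    expIntegralE₁]

lemma expIntegralE₂_strictAntiOn : StrictAntiOn expIntegralE₂ (Ioi 0) := by
  intro a (ha : 0 < a) b (hb : 0 < b) hab
  have hnonneg : ∀ᵐ t ∂volume.restrict (Ioi a), 0 ≤ exp (-t) * (1 - a / t) := by
    filter_upwards [ae_restrict_mem measurableSet_Ioi] with t (ht : a < t)
    exact mul_nonneg (exp_pos _).le (sub_nonneg.2 ((div_le_one (ha.trans ht)).2 ht.le))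
  calc expIntegralE₂ b < exp (-b) - a * expIntegralE₁ b := by
        unfold expIntegralE₂
        nlinarith [expIntegralE₁_pos hb]
    _ = ∫ t in Ioi b, exp (-t) * (1 - a / t) := (integral_exp_neg_mul_one_sub_div_Ioi hb a).symm
    _ ≤ ∫ t in Ioi a, exp (-t) * (1 - a / t) :=
        setIntegral_mono_set (integrableOn_exp_neg_mul_one_sub_div_Ioi ha a) hnonneg
          (Ioi_subset_Ioi hab.le).eventuallyLE
    _ = expIntegralE₂ a := integral_exp_neg_mul_one_sub_div_Ioi ha a

lemma tendsto_expIntegralE₂_atTop : Tendsto expIntegralE₂ atTop (nhds 0) := by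
  have hexp : Tendsto (fun u : ℝ => exp (-u)) atTop (nhds 0) := tendsto_exp_neg_atTop_nhds_zero
  have hmul : Tendsto (fun u => u * expIntegralE₁ u) atTop (nhds 0) := by
    refine tendsto_of_tendsto_of_tendsto_of_le_of_le' tendsto_const_nhds hexp ?_ ?_
    · filter_upwards [eventually_gt_atTop 0] with u hu
      exact mul_nonneg hu.le (expIntegralE₁_pos hu).le
    · filter_upwards [eventually_gt_atTop 0] with u hu
      calc u * expIntegralE₁ u ≤ u * (exp (-u) / u) :=
            mul_le_mul_of_nonneg_left (expIntegralE₁_le hu) hu.le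
        _ = exp (-u) := by field_simp
  exact (sub_zero (0 : ℝ)) ▸ hexp.sub hmul

/-- The outage probability `F(P_max) = e^{-Γ/(φP_max)} + (Γ/(φP_max)) Ei(-Γ/(φP_max))`
is strictly increasing in `P_max > 0` and tends to `0` as `P_max → 0⁺`. -/
theorem stmt11 (Γ φ : ℝ) (hΓ : 0 < Γ) (hφ : 0 < φ) :
    let F : ℝ → ℝ := fun P =>
      Real.exp (-Γ / (φ * P)) + Γ / (φ * P) * Ei (-(Γ / (φ * P)))
    StrictMonoOn F (Set.Ioi 0) ∧ Tendsto F (nhdsWithin 0 (Set.Ioi 0)) (nhds 0) := by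
  intro F
  have hF : F = fun P => expIntegralE₂ (Γ / (φ * P)) := by
    funext P
    simp only [F, expIntegralE₂, expIntegralE₁, Ei, neg_neg, neg_div]
    ring
  have hu : StrictAntiOn (fun P : ℝ => Γ / (φ * P)) (Ioi 0) := fun P (hP : 0 < P) Q _ hPQ =>
    div_lt_div_of_pos_left hΓ (mul_pos hφ hP) (mul_lt_mul_of_pos_left hPQ hφ)
  have hu_atTop : Tendsto (fun P : ℝ => Γ / (φ * P)) (nhdsWithin 0 (Ioi 0)) atTop :=
    (tendsto_inv_nhdsGT_zero.const_mul_atTop (div_pos hΓ hφ)).congr fun P => by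
      rw [← div_eq_mul_inv, div_div]
  refine hF ▸ ⟨?_, ?_⟩
  · exact expIntegralE₂_strictAntiOn.comp hu fun P (hP : 0 < P) => div_pos hΓ (mul_pos hφ hP)
  · exact tendsto_expIntegralE₂_atTop.comp hu_atTop
end

section
/- For fixed c > 0 and fixed r > 0, the function g(w) = w·ln(1 + c/(w + r)) is strictly increasing and concave in w on (0, ∞). -/
/-!
With `u = w + r`, the derivative of `g` is `log (1 + c/u) - c w / (u (u + c))`, which is positive
by `log (1 + x) > 2x / (x + 2)`, and the second derivative is
`-c (u (r + c) + (u + c) r) / (u (u + c))²`, which is nonpositive. Both signs hold on the whole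
half-line `w > -r` on which `g` is defined.
-/

open Real Set

section
variable {c r w : ℝ}

theorem hasDerivAt_log_one_add_div_add (hc : 0 ≤ c) (hw : 0 < w + r) :
    HasDerivAt (fun x => log (1 + c / (x + r))) (-(c / ((w + r) * (w + r + c)))) w := by
  have hv : 0 < w + r + c := by linarith
  refine (((hasDerivAt_const w c).fun_div ((hasDerivAt_id' w).add_const r) hw.ne').const_add 1
    |>.log (by positivity)).congr_deriv ?_
  field_simp
  ring

theorem hasDerivAt_mul_log_one_add_div_add (hc : 0 ≤ c) (hw : 0 < w + r) :
    HasDerivAt (fun x => x * log (1 + c / (x + r)))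
      (log (1 + c / (w + r)) - c * w / ((w + r) * (w + r + c))) w :=
  ((hasDerivAt_id' w).mul (hasDerivAt_log_one_add_div_add hc hw)).congr_deriv (by ring)

theorem hasDerivAt_log_one_add_div_add_sub_mul_div (hc : 0 ≤ c) (hw : 0 < w + r) :
    HasDerivAt (fun x => log (1 + c / (x + r)) - c * x / ((x + r) * (x + r + c)))
      (-(c * ((w + r) * (r + c) + (w + r + c) * r) / ((w + r) * (w + r + c)) ^ 2)) w := by
  have hv : 0 < w + r + c := by linarith
  have hden := ((hasDerivAt_id' w).add_const r).mul ((hasDerivAt_id' w).add_const r |>.add_const c)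
  refine ((hasDerivAt_log_one_add_div_add hc hw).sub
    (((hasDerivAt_id' w).const_mul c).fun_div hden (mul_pos hw hv).ne')).congr_deriv ?_
  simp only [Pi.mul_apply]
  field_simp
  ring

theorem mul_div_lt_log_one_add_div_add (hc : 0 < c) (hr : 0 ≤ r) (hw : 0 < w + r) :
    c * w / ((w + r) * (w + r + c)) < log (1 + c / (w + r)) := by
  have hv : 0 < w + r + c := by linarith
  calc c * w / ((w + r) * (w + r + c)) ≤ 2 * (c / (w + r)) / (c / (w + r) + 2) := by
        rw [div_le_div_iff₀ (mul_pos hw hv) (by positivity)]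
        field_simp
        -- `2u(u + c) - w(2u + c) = r(2u + c) + uc` with `u = w + r`
        nlinarith [mul_pos hc hw, mul_nonneg hr hc.le, mul_nonneg hr hw.le]
    _ < log (1 + c / (w + r)) := lt_log_one_add_of_pos (by positivity)

theorem continuousOn_mul_log_one_add_div_add (hc : 0 ≤ c) :
    ContinuousOn (fun x => x * log (1 + c / (x + r))) (Ioi (-r)) := fun _ hw =>
  (hasDerivAt_mul_log_one_add_div_add hc (neg_lt_iff_pos_add.mp hw)).continuousAt.continuousWithinAt

theorem strictMonoOn_mul_log_one_add_div_add (hc : 0 < c) (hr : 0 ≤ r) :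
    StrictMonoOn (fun x => x * log (1 + c / (x + r))) (Ioi (-r)) := by
  refine strictMonoOn_of_hasDerivWithinAt_pos (convex_Ioi _)
    (continuousOn_mul_log_one_add_div_add hc.le)
    (f' := fun x => log (1 + c / (x + r)) - c * x / ((x + r) * (x + r + c))) ?_ ?_
  all_goals rw [interior_Ioi]; intro w (hw : -r < w); have hwr : 0 < w + r := by linarith
  · exact (hasDerivAt_mul_log_one_add_div_add hc.le hwr).hasDerivWithinAt
  · exact sub_pos.mpr (mul_div_lt_log_one_add_div_add hc hr hwr)

theorem concaveOn_mul_log_one_add_div_add (hc : 0 ≤ c) (hr : 0 ≤ r) :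
    ConcaveOn ℝ (Ioi (-r)) (fun x => x * log (1 + c / (x + r))) := by
  refine concaveOn_of_hasDerivWithinAt2_nonpos (convex_Ioi _)
    (continuousOn_mul_log_one_add_div_add hc)
    (f' := fun x => log (1 + c / (x + r)) - c * x / ((x + r) * (x + r + c)))
    (f'' := fun x => -(c * ((x + r) * (r + c) + (x + r + c) * r) / ((x + r) * (x + r + c)) ^ 2))
    ?_ ?_ ?_
  all_goals rw [interior_Ioi]; intro w (hw : -r < w); have hwr : 0 < w + r := by linarith
  · exact (hasDerivAt_mul_log_one_add_div_add hc hwr).hasDerivWithinAt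
  · exact (hasDerivAt_log_one_add_div_add_sub_mul_div hc hwr).hasDerivWithinAt
  · have hv : 0 < w + r + c := by linarith
    exact neg_nonpos.mpr (div_nonneg (mul_nonneg hc (add_nonneg (mul_nonneg hwr.le (by linarith))
      (mul_nonneg hv.le hr))) (sq_nonneg _))

end

/-- For fixed `c, r > 0`, the function `g(w) = w · ln(1 + c/(w + r))` is strictly
increasing and concave on `(0, ∞)`. -/
theorem stmt12 (c r : ℝ) (hc : 0 < c) (hr : 0 < r) :
    StrictMonoOn (fun w => w * Real.log (1 + c / (w + r))) (Set.Ioi 0) ∧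
    ConcaveOn ℝ (Set.Ioi 0) (fun w => w * Real.log (1 + c / (w + r))) := by
  have hsub : Ioi (0 : ℝ) ⊆ Ioi (-r) := Ioi_subset_Ioi (by linarith)
  exact ⟨(strictMonoOn_mul_log_one_add_div_add hc hr.le).mono hsub,
    (concaveOn_mul_log_one_add_div_add hc.le hr.le).subset hsub (convex_Ioi 0)⟩
end
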